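/- arXiv:2006.09992 — 2 statements merged into one kernel-verified Lean document; each statement's English description precedes it below -/
import Mathlib

section
/- Suppose a nonnegative sequence (e_k)_{k≥0} satisfies e_k ≤ (1 − β_k) e_{k−1} + C₁ β_k + C₂ β_k² for all k ≥ 1, where β_k = 2/(k+2) and C₁, C₂ ≥ 0. Then for all K ≥ 1, e_K ≤ (4/(K+2)²) e_0 + (4K/(K+2)²) C₂ + 2 C₁. -/
theorem stmt8 (e : ℕ → ℝ) (C₁ C₂ : ℝ) (hC₁ : 0 ≤ C₁) (hC₂ : 0 ≤ C₂)
    (he : ∀ k, 0 ≤ e k)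
    (hrec : ∀ k, 1 ≤ k →
      e k ≤ (1 - 2 / ((k : ℝ) + 2)) * e (k - 1)
        + C₁ * (2 / ((k : ℝ) + 2)) + C₂ * (2 / ((k : ℝ) + 2)) ^ 2) :
    ∀ K : ℕ, 1 ≤ K →
      e K ≤ 4 / ((K : ℝ) + 2) ^ 2 * e 0
        + 4 * K / ((K : ℝ) + 2) ^ 2 * C₂ + 2 * C₁ := by
  intro K hK
  induction K, hK using Nat.le_induction with
  | base =>
    have h := hrec 1 le_rfl
    norm_num at h ⊢
    nlinarith [he 0]
  | succ K hK ih =>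
    have hr := hrec (K + 1) (by omega)
    have hx : (1:ℝ) ≤ (K:ℝ) := by exact_mod_cast hK
    set x := (K:ℝ) with hxdef
    have h2 : (0:ℝ) < x + 2 := by linarith
    have h3 : (0:ℝ) < x + 3 := by linarith
    simp only [Nat.add_sub_cancel] at hr
    push_cast at hr ⊢
    have hβnn : (0:ℝ) ≤ 1 - 2 / (x + 1 + 2) := by
      rw [sub_nonneg, div_le_one (by linarith)]; linarith
    have step1 : e (K + 1) ≤ (1 - 2 / (x + 1 + 2)) *
        (4 / (x + 2) ^ 2 * e 0 + 4 * x / (x + 2) ^ 2 * C₂ + 2 * C₁)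
        + C₁ * (2 / (x + 1 + 2)) + C₂ * (2 / (x + 1 + 2)) ^ 2 := by
      refine hr.trans ?_
      gcongr
    refine step1.trans ?_
    rw [← sub_nonneg]
    have key : (4 / (x + 1 + 2) ^ 2 * e 0 + 4 * (x + 1) / (x + 1 + 2) ^ 2 * C₂ + 2 * C₁)
        - ((1 - 2 / (x + 1 + 2)) *
        (4 / (x + 2) ^ 2 * e 0 + 4 * x / (x + 2) ^ 2 * C₂ + 2 * C₁)
        + C₁ * (2 / (x + 1 + 2)) + C₂ * (2 / (x + 1 + 2)) ^ 2)
        = (4 * e 0 + 4 * x * C₂) / ((x + 2) ^ 2 * (x + 3) ^ 2) + 2 * C₁ / (x + 3) := by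
      field_simp
      ring
    rw [key]
    have h0 := he 0
    have : 0 ≤ (4 * e 0 + 4 * x * C₂) / ((x + 2) ^ 2 * (x + 3) ^ 2) := by
      apply div_nonneg (by nlinarith) (by positivity)
    have : 0 ≤ 2 * C₁ / (x + 3) := by positivity
    linarith
end

section
/- Let f: R^d → R be δ-strongly convex with L-Lipschitz gradient, and let the stochastic gradient at u be G = ∇f(u) + Δ. Let g be any vector, α > 0, and let w minimize x ↦ ⟨G, x − u⟩ + (α/2)‖x − u‖² + q(x) where q is convex differentiable with ∇q(w) = −g. Then for all y: f(w) − f(y) ≤ ⟨Δ − g, y − w⟩ − (α − L/2)‖u − w‖² − α⟨u − w, y − u⟩ − (δ/2)‖y − u‖². -/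
open scoped RealInnerProductSpace

theorem stmt13 {d : ℕ} (f : EuclideanSpace ℝ (Fin d) → ℝ)
    (f' : EuclideanSpace ℝ (Fin d) → EuclideanSpace ℝ (Fin d))
    (δ L α : ℝ) (hα : 0 < α)
    (hstrong : ∀ x y, f y ≥ f x + ⟪f' x, y - x⟫ + δ / 2 * ‖y - x‖ ^ 2)
    (hsmooth : ∀ x y, f y ≤ f x + ⟪f' x, y - x⟫ + L / 2 * ‖y - x‖ ^ 2)
    (Δ g u w : EuclideanSpace ℝ (Fin d))
    (hopt : α • (u - w) = f' u + Δ - g) :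
    ∀ y, f w - f y ≤ ⟪Δ - g, y - w⟫ - (α - L / 2) * ‖u - w‖ ^ 2
      - α * ⟪u - w, y - u⟫ - δ / 2 * ‖y - u‖ ^ 2 := by
  intro y
  have h1 := hsmooth u w
  have h2 := hstrong u y
  have hf : f' u = α • (u - w) - Δ + g := by rw [hopt]; abel
  have hwu : ‖w - u‖ = ‖u - w‖ := by rw [← norm_neg]; congr 1; abel
  have e1 : ⟪f' u, w - u⟫ = -(α * ‖u - w‖ ^ 2) - ⟪Δ, w - u⟫ + ⟪g, w - u⟫ := by
    rw [hf, inner_add_left, inner_sub_left, real_inner_smul_left]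
    have : ⟪u - w, w - u⟫ = -‖u - w‖ ^ 2 := by
      rw [show w - u = -(u - w) by abel, inner_neg_right, real_inner_self_eq_norm_sq]
    rw [this]; ring
  have e2 : ⟪f' u, y - u⟫ = α * ⟪u - w, y - u⟫ - ⟪Δ, y - u⟫ + ⟪g, y - u⟫ := by
    rw [hf, inner_add_left, inner_sub_left, real_inner_smul_left]
  have e3 : ⟪Δ - g, y - w⟫ = ⟪Δ, y - u⟫ - ⟪g, y - u⟫ - ⟪Δ, w - u⟫ + ⟪g, w - u⟫ := by
    simp only [inner_sub_left, inner_sub_right]; ring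
  rw [hwu] at h1
  rw [e1] at h1; rw [e2] at h2; rw [e3]
  linarith
end
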